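/- arXiv:2102.01411 — 2 statements merged into one kernel-verified Lean document; each statement's English description precedes it below -/
import Mathlib

section
/- For every finite graph G, the clustering algorithm Cluster applied to the node set of G results in a partition of the nodes of G: every node of G belongs to exactly one of the (nonempty) clusters produced by the algorithm. -/
/-!
Formalisation of the clustering algorithm `Cluster` from
"Optimisation by Pre-Compilation".

A graph is given by a vertex type `V` with a symmetric adjacency
relation `Adj`.  `Deg N n` is the degree of `n` within the node set `N`,
`NDeg N n` the normalised degree.  An execution of the (nondeterministic)
clustering algorithm is modelled by the inductive predicates
`Propagates` (the propagation phase growing one cluster) and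
`ClusterExec` (the driver, producing the list of clusters).
-/

namespace P2P

variable {V : Type*}

/-- The degree of node `n` within the set of nodes `N`:
the number of nodes in `N \ {n}` adjacent to `n`. -/
noncomputable def Deg (Adj : V → V → Prop) (N : Set V) (n : V) : ℕ :=
  {m ∈ N | m ≠ n ∧ Adj m n}.ncard

/-- The normalised degree of node `n` within the set of nodes `N`:
the number of nodes in `N \ {n}` adjacent to `n` whose degree exceeds `1`. -/
noncomputable def NDeg (Adj : V → V → Prop) (N : Set V) (n : V) : ℕ :=
  {m ∈ N | m ≠ n ∧ Adj m n ∧ 1 < Deg Adj N m}.ncard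

/-- The extension set `I` of the propagation phase: the unclustered nodes
(of `U`) adjacent to some node `n'` of the current cluster `C` with
`NDeg (U ∪ C) n' ≤ 2`, together with the unclustered nodes adjacent to some
node `n'` of `C` with `Deg (U ∪ C) n' = 1`. -/
def extSet (Adj : V → V → Prop) (U C : Set V) : Set V :=
  {n ∈ U | ∃ n' ∈ C, Adj n n' ∧
      (NDeg Adj (U ∪ C) n' ≤ 2 ∨ Deg Adj (U ∪ C) n' = 1)}

/-- `Propagates Adj U C C'` : starting from the set `U` of unclustered nodes
and current cluster `C`, repeatedly adding the extension set (and removing it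
from the unclustered nodes) terminates with final cluster `C'`. -/
inductive Propagates (Adj : V → V → Prop) : Set V → Set V → Set V → Prop
  | done (U C : Set V) : extSet Adj U C = ∅ → Propagates Adj U C C
  | step (U C C' : Set V) : extSet Adj U C ≠ ∅ →
      Propagates Adj (U \ extSet Adj U C) (C ∪ extSet Adj U C) C' →
      Propagates Adj U C C'

/-- `ClusterExec Adj U Cs` : one possible execution of the clustering
algorithm on the set `U` of (still unclustered) nodes, producing the list of
clusters `Cs`.  While unclustered nodes remain, a node `n` of minimal
normalised degree among the unclustered nodes is chosen, the new cluster is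
started as `{n}` and grown by propagation; its nodes are removed from the
unclustered set. -/
inductive ClusterExec (Adj : V → V → Prop) : Set V → List (Set V) → Prop
  | nil : ClusterExec Adj ∅ []
  | cons {U : Set V} {n : V} {C : Set V} {rest : List (Set V)} :
      n ∈ U →
      (∀ m ∈ U, NDeg Adj U n ≤ NDeg Adj U m) →
      Propagates Adj (U \ {n}) {n} C →
      ClusterExec Adj (U \ C) rest →
      ClusterExec Adj U (C :: rest)

/-- A graph is connected if any two nodes are joined by a chain of
adjacent nodes. -/
def Conn (Adj : V → V → Prop) : Prop :=
  ∀ a b : V, Relation.ReflTransGen Adj a b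

end P2P

/-!
Propagation only moves nodes from the unclustered set into the cluster, so each cluster
contains its seed and lies inside the nodes still unclustered when it was started; the rest of
the execution runs on the complement of that cluster. Induction on the execution then gives
the partition.
-/

namespace P2P

variable {V : Type*} {Adj : V → V → Prop}

lemma extSet_subset (U C : Set V) : extSet Adj U C ⊆ U :=
  Set.sep_subset _ _

namespace Propagates

lemma subset_result {U C C' : Set V} (h : Propagates Adj U C C') : C ⊆ C' := by
  induction h with
  | done => rfl
  | step _ _ _ _ _ ih => exact Set.subset_union_left.trans ih

lemma result_subset {U C C' : Set V} (h : Propagates Adj U C C') : C' ⊆ U ∪ C := by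
  induction h with
  | done => exact Set.subset_union_right
  | step U C _ _ _ ih =>
    refine ih.trans (Set.union_subset ?_ (Set.union_subset ?_ ?_))
    · exact Set.sdiff_subset.trans Set.subset_union_left
    · exact Set.subset_union_right
    · exact (extSet_subset U C).trans Set.subset_union_left

end Propagates

namespace ClusterExec

lemma nonempty_and_subset {U : Set V} {Cs : List (Set V)} (h : ClusterExec Adj U Cs) :
    ∀ C ∈ Cs, C.Nonempty ∧ C ⊆ U := by
  induction h with
  | nil => simp
  | @cons U n C rest hn _ hprop _ ih =>
    intro D hD
    rcases List.mem_cons.mp hD with rfl | hD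
    · exact ⟨⟨n, hprop.subset_result rfl⟩, hprop.result_subset.trans
        (Set.union_subset Set.sdiff_subset (Set.singleton_subset_iff.2 hn))⟩
    · exact (ih D hD).imp_right (·.trans Set.sdiff_subset)

lemma existsUnique_mem {U : Set V} {Cs : List (Set V)} (h : ClusterExec Adj U Cs) :
    ∀ v ∈ U, ∃! C, C ∈ Cs ∧ v ∈ C := by
  induction h with
  | nil => simp
  | @cons U n C rest _ _ _ hrest ih =>
    intro v hv
    -- the later clusters live in `U \ C`, so they miss every node of `C`
    have hdisj : ∀ D ∈ rest, v ∈ D → v ∉ C := fun D hD hvD =>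
      ((hrest.nonempty_and_subset D hD).2 hvD).2
    by_cases hvC : v ∈ C
    · refine ⟨C, ⟨List.mem_cons_self, hvC⟩, ?_⟩
      rintro D ⟨hD, hvD⟩
      rcases List.mem_cons.mp hD with rfl | hD
      · rfl
      · exact absurd hvC (hdisj D hD hvD)
    · obtain ⟨D, ⟨hD, hvD⟩, huniq⟩ := ih v ⟨hv, hvC⟩
      refine ⟨D, ⟨List.mem_cons_of_mem _ hD, hvD⟩, ?_⟩
      rintro E ⟨hE, hvE⟩
      rcases List.mem_cons.mp hE with rfl | hE
      · exact absurd hvE hvC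
      · exact huniq E ⟨hE, hvE⟩

end ClusterExec

end P2P

open P2P in
theorem cluster_isPartition_general {V : Type*}
    (Adj : V → V → Prop)
    (Cs : List (Set V)) (hexec : ClusterExec Adj Set.univ Cs) :
    (∀ C ∈ Cs, C.Nonempty) ∧ (∀ v : V, ∃! C, C ∈ Cs ∧ v ∈ C) :=
  ⟨fun C hC => (hexec.nonempty_and_subset C hC).1,
    fun v => hexec.existsUnique_mem v (Set.mem_univ v)⟩

open P2P in
/-- For every finite graph `G` (symmetric adjacency `Adj`
on the finite node set `V`), every execution of the clustering algorithm
`Cluster` on the node set of `G` results in a partition of the nodes: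
every cluster produced is nonempty, and every node belongs to exactly
one of the clusters. -/
theorem cluster_isPartition {V : Type*} [Fintype V]
    (Adj : V → V → Prop) (hsymm : Symmetric Adj)
    (Cs : List (Set V)) (hexec : ClusterExec Adj Set.univ Cs) :
    (∀ C ∈ Cs, C.Nonempty) ∧ (∀ v : V, ∃! C, C ∈ Cs ∧ v ∈ C) :=
  cluster_isPartition_general Adj Cs hexec
end

section
/- If G is a finite connected graph with more than 2 nodes and C is a clustering of its node set produced by the clustering algorithm Cluster, then the number of nonempty clusters in C is at most |V| − 2; that is, applying Cluster to a connected graph with n > 2 nodes reduces the number of nodes (when clusters are regarded as the nodes of the hypergraph) by at least 2. -/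
/-!
Look at the first cluster `C`, started at a node `n` of minimal normalised degree.
If `|C| ≥ 3` there is nothing to do. If `C = {n}`, then `n` has a neighbour, so the
propagation stopped only because `NDeg n ≥ 3`; by minimality every node has normalised
degree `≥ 3`, hence degree `≥ 2` after `n` is removed. On a nonempty node set of minimum
degree `≥ 2` the first cluster is never a pair (its start would be a leaf) and a singleton
first cluster reproduces the situation, so such a set loses at least two nodes.
If `C = {n, m}`, then `n` is a leaf hanging on `m`, and connectivity with `|V| > 2` gives
`m` a neighbour outside `C`; the propagation stopped at `m`, so `NDeg m ≥ 3`, which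
produces an edge outside `C`, and a node set containing an edge loses at least one node.
-/

lemma Set.eq_singleton_or_eq_pair_or_three_le_ncard {α : Type*} {s : Set α} {a : α}
    (hs : s.Finite) (ha : a ∈ s) : s = {a} ∨ (∃ b, b ≠ a ∧ s = {a, b}) ∨ 3 ≤ s.ncard := by
  rcases Nat.lt_or_ge s.ncard 3 with hlt | h3
  · obtain h1 | h2 : s.ncard = 1 ∨ s.ncard = 2 := by
      have := (Set.ncard_pos hs).mpr ⟨a, ha⟩
      omega
    · obtain ⟨x, rfl⟩ := Set.ncard_eq_one.mp h1
      exact Or.inl (by rw [Set.mem_singleton_iff.mp ha])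
    · obtain ⟨x, y, hxy, rfl⟩ := Set.ncard_eq_two.mp h2
      rcases ha with rfl | rfl
      · exact Or.inr (Or.inl ⟨y, hxy.symm, rfl⟩)
      · exact Or.inr (Or.inl ⟨x, hxy, Set.pair_comm _ _⟩)
  · exact Or.inr (Or.inr h3)

namespace P2P

variable {V : Type*} {Adj : V → V → Prop}

section Degrees

variable [Finite V]

lemma deg_pos_iff {N : Set V} {n : V} : 0 < Deg Adj N n ↔ ∃ m ∈ N, m ≠ n ∧ Adj m n :=
  Set.ncard_pos

lemma ndeg_pos_iff {N : Set V} {n : V} :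
    0 < NDeg Adj N n ↔ ∃ m ∈ N, m ≠ n ∧ Adj m n ∧ 1 < Deg Adj N m :=
  Set.ncard_pos

lemma ndeg_le_deg (N : Set V) (n : V) : NDeg Adj N n ≤ Deg Adj N n :=
  Set.ncard_le_ncard fun _ hm => ⟨hm.1, hm.2.1, hm.2.2.1⟩

lemma deg_le_deg_diff_singleton_add_one (U : Set V) (n x : V) :
    Deg Adj U x ≤ Deg Adj (U \ {n}) x + 1 := by
  have hdiff : {m ∈ U | m ≠ x ∧ Adj m x} \ {n} = {m ∈ U \ {n} | m ≠ x ∧ Adj m x} := by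
    ext m; simp only [Set.mem_sdiff, Set.mem_ofPred_eq]; tauto
  calc Deg Adj U x ≤ ({m ∈ U | m ≠ x ∧ Adj m x} \ {n}).ncard + ({n} : Set V).ncard :=
        Set.ncard_le_ncard_sdiff_add_ncard _ _
    _ = Deg Adj (U \ {n}) x + 1 := by rw [hdiff, Set.ncard_singleton]; rfl

lemma deg_le_one_of_forall_adj_eq {U : Set V} {n m : V}
    (h : ∀ x ∈ U, x ≠ n → Adj x n → x = m) : Deg Adj U n ≤ 1 :=
  (Set.ncard_le_ncard (t := {m}) fun x hx => h x hx.1 hx.2.1 hx.2.2).trans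
    (Set.ncard_singleton m).le

lemma exists_adj_ne_of_one_lt_deg {U : Set V} {n : V} (h : 1 < Deg Adj U n) (m : V) :
    ∃ x ∈ U, x ≠ n ∧ Adj x n ∧ x ≠ m := by
  by_contra! hne
  exact (deg_le_one_of_forall_adj_eq hne).not_gt h

end Degrees

lemma mem_extSet_singleton_of_mem {U : Set V} {n e x : V} (he : e ∈ extSet Adj U {n})
    (hx : x ∈ U) (hadj : Adj x n) : x ∈ extSet Adj U {n} := by
  obtain ⟨-, n', rfl, -, hcond⟩ := he
  exact ⟨hx, n', rfl, hadj, hcond⟩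

lemma two_lt_ndeg_of_extSet_eq_empty {U C : Set V} (hE : extSet Adj U C = ∅) {x n : V}
    (hx : x ∈ U) (hn : n ∈ C) (hadj : Adj x n) : 2 < NDeg Adj (U ∪ C) n := by
  by_contra! hle
  have hxE : x ∈ extSet Adj U C := ⟨hx, n, hn, hadj, Or.inl hle⟩
  simp [hE] at hxE

lemma Propagates.subset {U C C' : Set V} (h : Propagates Adj U C C') :
    C ⊆ C' ∧ C' ⊆ U ∪ C := by
  induction h with
  | done => exact ⟨subset_rfl, Set.subset_union_right⟩
  | step U C C' _ _ ih =>
    refine ⟨Set.subset_union_left.trans ih.1, ih.2.trans ?_⟩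
    rintro x (hx | hx | hx)
    · exact Or.inl hx.1
    · exact Or.inr hx
    · exact Or.inl (extSet_subset U C hx)

lemma Propagates.extSet_eq_empty {U C : Set V} (h : Propagates Adj U C C)
    (hUC : Disjoint U C) : extSet Adj U C = ∅ := by
  generalize hC' : C = C' at h
  cases h with
  | done => assumption
  | step _ _ _ hne hnext =>
    subst hC'
    obtain ⟨x, hx⟩ := Set.nonempty_iff_ne_empty.mpr hne
    exact absurd (hnext.subset.1 (Or.inr hx)) (Set.disjoint_left.mp hUC (extSet_subset U C hx))

lemma Propagates.mem_subset {U C : Set V} {n : V} (hn : n ∈ U)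
    (h : Propagates Adj (U \ {n}) {n} C) : n ∈ C ∧ C ⊆ U := by
  refine ⟨h.subset.1 rfl, fun x hx => ?_⟩
  rcases h.subset.2 hx with hx | rfl
  exacts [hx.1, hn]

lemma Propagates.ncard_eq_ncard_sdiff_add [Finite V] {U C : Set V} {n : V} (hn : n ∈ U)
    (hprop : Propagates Adj (U \ {n}) {n} C) : U.ncard = (U \ C).ncard + C.ncard :=
  (Set.ncard_sdiff_add_ncard_of_subset (hprop.mem_subset hn).2).symm

lemma two_le_deg_of_singleton_cluster [Finite V] {U : Set V} {n x : V} (hn : n ∈ U)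
    (hmin : ∀ m ∈ U, NDeg Adj U n ≤ NDeg Adj U m)
    (hprop : Propagates Adj (U \ {n}) {n} {n})
    (hx : x ∈ U) (hxn : x ≠ n) (hadj : Adj x n) :
    ∀ y ∈ U \ {n}, 2 ≤ Deg Adj (U \ {n}) y := by
  have hE := hprop.extSet_eq_empty Set.disjoint_sdiff_left
  have hn3 : 2 < NDeg Adj U n := by
    simpa [Set.insert_eq_of_mem hn] using
      two_lt_ndeg_of_extSet_eq_empty hE ⟨hx, hxn⟩ rfl hadj
  intro y hy
  have := (hmin y hy.1).trans (ndeg_le_deg U y)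
  have := deg_le_deg_diff_singleton_add_one (Adj := Adj) U n y
  omega

lemma Propagates.forall_adj_eq_and_extSet_eq_empty {U : Set V} {n m : V} (hmn : m ≠ n)
    (hprop : Propagates Adj (U \ {n}) {n} {n, m}) :
    (∀ x ∈ U, x ≠ n → Adj x n → x = m) ∧ extSet Adj (U \ {n, m}) {n, m} = ∅ := by
  generalize hC : ({n, m} : Set V) = C at hprop
  cases hprop with
  | done =>
    have hm : m ∈ ({n} : Set V) := hC ▸ Or.inr rfl
    exact absurd hm hmn
  | step _ _ _ hne hnext =>
    subst hC
    set E := extSet Adj (U \ {n}) {n}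
    have hEm : E = {m} := by
      refine (Set.nonempty_iff_ne_empty.mpr hne).subset_singleton_iff.mp fun x hx => ?_
      have hxn : x ≠ n := (extSet_subset _ _ hx).2
      rcases hnext.subset.1 (Or.inr hx) with rfl | hxm
      exacts [absurd rfl hxn, hxm]
    obtain ⟨e, he⟩ := Set.nonempty_iff_ne_empty.mpr hne
    refine ⟨fun x hx hxn hadj => ?_, ?_⟩
    · have hxE : x ∈ E := mem_extSet_singleton_of_mem he ⟨hx, hxn⟩ hadj
      rwa [hEm] at hxE
    · rw [hEm, Set.sdiff_sdiff, Set.singleton_union] at hnext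
      exact hnext.extSet_eq_empty Set.disjoint_sdiff_left

lemma Conn.exists_adj_of_ne_univ (hconn : Conn Adj) {S : Set V} {a : V} (ha : a ∈ S)
    (hS : S ≠ Set.univ) : ∃ x ∉ S, ∃ y ∈ S, Adj x y := by
  by_contra! hclosed
  refine hS (Set.eq_univ_of_forall fun b => ?_)
  induction hconn b a using Relation.ReflTransGen.head_induction_on with
  | refl => exact ha
  | head hbc _ hc => by_contra hb; exact hclosed _ hb _ hc hbc

lemma exists_adj_of_pair_cluster [Finite V] (hsymm : Symmetric Adj) (hconn : Conn Adj)
    {n m : V} (hpair : ({n, m} : Set V) ≠ Set.univ)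
    (hnbr : ∀ y ∈ Set.univ, y ≠ n → Adj y n → y = m)
    (hext : extSet Adj (Set.univ \ {n, m}) {n, m} = ∅) :
    ∃ a ∈ Set.univ \ {n, m}, ∃ b ∈ Set.univ \ {n, m}, a ≠ b ∧ Adj a b := by
  obtain ⟨x, hx, y, hy, hadj⟩ := hconn.exists_adj_of_ne_univ (Or.inl rfl) hpair
  obtain rfl | rfl := hy
  · exact absurd (hnbr x trivial (fun h => hx (Or.inl h)) hadj) (fun h => hx (Or.inr h))
  have hm3 : 2 < NDeg Adj Set.univ y := by
    simpa [Set.sdiff_union_of_subset (Set.subset_univ _)] using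
      two_lt_ndeg_of_extSet_eq_empty hext ⟨trivial, hx⟩ (Or.inr rfl) hadj
  obtain ⟨w, -, hwm, hwadj, hw⟩ := ndeg_pos_iff.mp (by omega : 0 < NDeg Adj Set.univ y)
  have hwn : w ≠ n := by
    rintro rfl
    exact (deg_le_one_of_forall_adj_eq hnbr).not_gt hw
  obtain ⟨z, -, hzw, hzadj, hzm⟩ := exists_adj_ne_of_one_lt_deg hw y
  have hzn : z ≠ n := by
    rintro rfl
    exact hwm (hnbr w trivial hwn (hsymm hzadj))
  exact ⟨z, ⟨trivial, by simp [hzn, hzm]⟩, w, ⟨trivial, by simp [hwn, hwm]⟩, hzw, hzadj⟩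

namespace ClusterExec

variable [Finite V] {U : Set V} {Cs : List (Set V)}

lemma length_le (h : ClusterExec Adj U Cs) : Cs.length ≤ U.ncard := by
  induction h with
  | nil => simp
  | cons hn _ hprop _ ih =>
    have := hprop.ncard_eq_ncard_sdiff_add hn
    have := (Set.ncard_pos (Set.toFinite _)).mpr ⟨_, (hprop.mem_subset hn).1⟩
    simp only [List.length_cons]
    omega

lemma length_add_two_le (h : ClusterExec Adj U Cs) (hdeg : ∀ x ∈ U, 2 ≤ Deg Adj U x)
    (hU : U.Nonempty) : Cs.length + 2 ≤ U.ncard := by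
  induction h with
  | nil => exact absurd hU Set.not_nonempty_empty
  | @cons U n C rest hn hmin hprop hrest ih =>
    have hcard := hprop.ncard_eq_ncard_sdiff_add hn
    rcases Set.eq_singleton_or_eq_pair_or_three_le_ncard (Set.toFinite C)
      (hprop.mem_subset hn).1 with rfl | ⟨m, hmn, rfl⟩ | h3
    · obtain ⟨x, hx, hxn, hadj⟩ := deg_pos_iff.mp (two_pos.trans_le (hdeg n hn))
      have := ih (two_le_deg_of_singleton_cluster hn hmin hprop hx hxn hadj)
        ⟨x, hx, hxn⟩
      simp only [List.length_cons, Set.ncard_singleton] at hcard ⊢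
      omega
    · have := deg_le_one_of_forall_adj_eq (hprop.forall_adj_eq_and_extSet_eq_empty hmn).1
      have := hdeg n hn
      omega
    · have := hrest.length_le
      simp only [List.length_cons]
      omega

lemma length_add_one_le (hsymm : Symmetric Adj) (h : ClusterExec Adj U Cs)
    (hedge : ∃ x ∈ U, ∃ y ∈ U, x ≠ y ∧ Adj x y) : Cs.length + 1 ≤ U.ncard := by
  induction h with
  | nil => obtain ⟨x, hx, -⟩ := hedge; exact absurd hx (Set.notMem_empty x)
  | @cons U n C rest hn hmin hprop hrest ih =>
    obtain ⟨x, hx, y, hy, hxy, hadj⟩ := hedge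
    have hcard := hprop.ncard_eq_ncard_sdiff_add hn
    rcases Set.eq_singleton_or_eq_pair_or_three_le_ncard (Set.toFinite C)
      (hprop.mem_subset hn).1 with rfl | ⟨m, hmn, rfl⟩ | h3
    · simp only [List.length_cons, Set.ncard_singleton] at hcard ⊢
      by_cases hiso : ∃ z ∈ U, z ≠ n ∧ Adj z n
      · obtain ⟨z, hz, hzn, hzadj⟩ := hiso
        have := hrest.length_add_two_le
          (two_le_deg_of_singleton_cluster hn hmin hprop hz hzn hzadj) ⟨z, hz, hzn⟩
        omega
      · push Not at hiso
        have hxn : x ≠ n := by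
          rintro rfl
          exact hiso y hy (Ne.symm hxy) (hsymm hadj)
        have hyn : y ≠ n := by
          rintro rfl
          exact hiso x hx hxy hadj
        have := ih ⟨x, ⟨hx, hxn⟩, y, ⟨hy, hyn⟩, hxy, hadj⟩
        omega
    · have := hrest.length_le
      rw [Set.ncard_pair hmn.symm] at hcard
      simp only [List.length_cons]
      omega
    · have := hrest.length_le
      simp only [List.length_cons]
      omega

end ClusterExec

end P2P

open P2P in
/-- If `G` is a finite connected graph with more than `2`
nodes and `Cs` is a clustering of its node set produced by (any execution
of) the clustering algorithm `Cluster`, then the number of (nonempty)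
clusters produced is at most `|V| - 2`: clustering reduces the number of
nodes by at least `2`. -/
theorem cluster_card_le {V : Type*} [Fintype V]
    (Adj : V → V → Prop) (hsymm : Symmetric Adj) (hconn : Conn Adj)
    (hcard : 2 < Fintype.card V)
    (Cs : List (Set V)) (hexec : ClusterExec Adj Set.univ Cs) :
    Cs.length ≤ Fintype.card V - 2 := by
  have huniv : (Set.univ : Set V).ncard = Fintype.card V := by simp
  have hne_univ {S : Set V} (hS : S.ncard ≤ 2) : S ≠ Set.univ := by
    rintro rfl
    omega
  generalize hU : Set.univ = U at hexec
  cases hexec with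
  | nil =>
    have : Nonempty V := Fintype.card_pos_iff.mp (by omega)
    exact absurd hU Set.univ_nonempty.ne_empty
  | @cons _ n C rest hn hmin hprop hrest =>
    subst hU
    have hC := hprop.ncard_eq_ncard_sdiff_add hn
    rcases Set.eq_singleton_or_eq_pair_or_three_le_ncard (Set.toFinite C)
      (hprop.mem_subset hn).1 with rfl | ⟨m, hmn, rfl⟩ | h3
    · obtain ⟨x, hxn, _, rfl, hadj⟩ :=
        hconn.exists_adj_of_ne_univ (S := {n}) rfl (hne_univ (by simp))
      have := hrest.length_add_two_le
        (two_le_deg_of_singleton_cluster hn hmin hprop trivial hxn hadj) ⟨x, trivial, hxn⟩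
      simp only [List.length_cons, Set.ncard_singleton] at hC ⊢
      omega
    · obtain ⟨hnbr, hext⟩ := hprop.forall_adj_eq_and_extSet_eq_empty hmn
      have := hrest.length_add_one_le hsymm <| exists_adj_of_pair_cluster hsymm hconn
        (hne_univ (Set.ncard_pair hmn.symm).le) hnbr hext
      rw [Set.ncard_pair hmn.symm] at hC
      simp only [List.length_cons]
      omega
    · have := hrest.length_le
      simp only [List.length_cons]
      omega
end
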